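/- For every integer k ≥ 0, the real vector space of triples (P₁, P₂, P₃) ∈ 𝒫_{k−1}³ for which there exists q ∈ 𝒫_k with Σ_{j=1}^{3} ∂_{x_j}(x_j P_i) = ∂_{x_i} q for i = 1, 2, 3 (where (x₁, x₂, x₃) = (x, y, z)) has dimension (k³ + 6k² + 11k)/6, which equals dim 𝒫_k − 1. -/

import Mathlib

open MvPolynomial

noncomputable section

/-- Real polynomials in the three variables `x, y, z` (indexed `0, 1, 2`). -/
abbrev P3 := MvPolynomial (Fin 3) ℝ

/-- The space `𝒫_m` of polynomials of total degree at most `m`, with the convention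
`𝒫_m = {0}` for `m < 0`. -/
def polyLE3 (m : ℤ) : Submodule ℝ P3 :=
  if 0 ≤ m then restrictTotalDegree (Fin 3) ℝ m.toNat else ⊥

/-- The row-wise divergence of the matrix `M(P₁,P₂,P₃)` with entries `M i j = x_j * P i`:
its `i`-th component is `Σ_j ∂_{x_j} (x_j P_i)`. -/
def rowDiv (P : Fin 3 → P3) : Fin 3 → P3 := fun i => ∑ j : Fin 3, pderiv j (X j * P i)

lemma rowDiv_add (P Q : Fin 3 → P3) : rowDiv (P + Q) = rowDiv P + rowDiv Q := by
  funext i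
  simp [rowDiv, mul_add, Finset.sum_add_distrib]

lemma rowDiv_smul (c : ℝ) (P : Fin 3 → P3) : rowDiv (c • P) = c • rowDiv P := by
  funext i
  simp [rowDiv, mul_smul_comm, Finset.smul_sum]

/-- The space of triples `(P₁,P₂,P₃) ∈ 𝒫_{k-1}³` whose row-wise divergence (of the
associated matrix `M(P₁,P₂,P₃)`) is the gradient of some polynomial `q ∈ 𝒫_k`. -/
def gradDivTriples (k : ℕ) : Submodule ℝ (Fin 3 → P3) where
  carrier := {P | (∀ i, P i ∈ polyLE3 ((k : ℤ) - 1)) ∧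
    ∃ q ∈ polyLE3 (k : ℤ), ∀ i, rowDiv P i = pderiv i q}
  add_mem' := by
    rintro P Q ⟨hP, q1, hq1, hd1⟩ ⟨hQ, q2, hq2, hd2⟩
    refine ⟨fun i => Submodule.add_mem _ (hP i) (hQ i),
      q1 + q2, Submodule.add_mem _ hq1 hq2, fun i => ?_⟩
    rw [rowDiv_add]
    simp [hd1 i, hd2 i]
  zero_mem' := by
    refine ⟨fun i => Submodule.zero_mem _, 0, Submodule.zero_mem _, fun i => ?_⟩
    simp [rowDiv]
  smul_mem' := by
    rintro c P ⟨hP, q1, hq1, hd1⟩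
    refine ⟨fun i => Submodule.smul_mem _ c (hP i),
      c • q1, Submodule.smul_mem _ c hq1, fun i => ?_⟩
    rw [rowDiv_smul]
    simp [hd1 i]

/-!
The operator `L p = ∑ⱼ ∂ⱼ (xⱼ p)` is diagonal in the monomial basis: it multiplies `X^d` by
`|d| + 3`. Hence it is invertible and preserves `𝒫_m`, and the condition `L Pᵢ = ∂ᵢ q` says
exactly `Pᵢ = L⁻¹ ∂ᵢ q`. So `q ↦ (L⁻¹ ∂ᵢ q)ᵢ` maps `𝒫_k` onto the space of triples, and its
kernel consists of the `q` with vanishing gradient, i.e. the constants. The dimension is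
therefore `dim 𝒫_k - 1 = (k + 3 choose 3) - 1`.
-/

namespace MvPolynomial

variable {σ R : Type*}

section CommSemiring

variable [CommSemiring R]

def scaleCoeffs (w : (σ →₀ ℕ) → R) : MvPolynomial σ R →ₗ[R] MvPolynomial σ R :=
  (basisMonomials σ R).constr R fun d => monomial d (w d)

@[simp]
lemma coeff_scaleCoeffs (w : (σ →₀ ℕ) → R) (p : MvPolynomial σ R) (d : σ →₀ ℕ) :
    coeff d (scaleCoeffs w p) = w d * coeff d p := by
  classical
  induction p using induction_on' with
  | monomial e a =>
    have hbasis : monomial e a = a • basisMonomials σ R e := by simp [smul_monomial]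
    rw [hbasis, map_smul, scaleCoeffs, Module.Basis.constr_basis]
    simp only [coeff_smul, coeff_monomial, coe_basisMonomials, smul_eq_mul]
    split_ifs with h <;> simp [h, mul_comm]
  | add p q hp hq => simp [hp, hq, mul_add]

lemma support_scaleCoeffs_subset (w : (σ →₀ ℕ) → R) (p : MvPolynomial σ R) :
    (scaleCoeffs w p).support ⊆ p.support := by
  intro d hd
  rw [mem_support_iff, coeff_scaleCoeffs] at hd
  exact mem_support_iff.mpr (right_ne_zero_of_mul hd)

lemma sum_pderiv_X_mul [Fintype σ] (p : MvPolynomial σ R) :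
    ∑ j, pderiv j (X j * p) =
      scaleCoeffs (fun d => ((d.degree + Fintype.card σ : ℕ) : R)) p := by
  ext d
  simp only [coeff_sum, coeff_pderiv, coeff_scaleCoeffs, add_comm d, coeff_X_mul,
    Finsupp.degree_eq_sum]
  push_cast
  rw [← Finset.mul_sum, Finset.sum_add_distrib]
  simp [mul_comm]

end CommSemiring

section Field

variable {K : Type*} [Field K]

lemma scaleCoeffs_inv_scaleCoeffs {w : (σ →₀ ℕ) → K} (hw : ∀ d, w d ≠ 0)
    (p : MvPolynomial σ K) : scaleCoeffs w⁻¹ (scaleCoeffs w p) = p := by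
  ext d
  simp [hw d]

lemma scaleCoeffs_scaleCoeffs_inv {w : (σ →₀ ℕ) → K} (hw : ∀ d, w d ≠ 0)
    (p : MvPolynomial σ K) : scaleCoeffs w (scaleCoeffs w⁻¹ p) = p := by
  ext d
  simp [hw d]

lemma sum_pderiv_X_mul_eq_iff [Fintype σ] [Nonempty σ] [CharZero K]
    {p g : MvPolynomial σ K} :
    ∑ j, pderiv j (X j * p) = g ↔
      p = scaleCoeffs (fun d => ((d.degree + Fintype.card σ : ℕ) : K))⁻¹ g := by
  have hw (d : σ →₀ ℕ) : ((d.degree + Fintype.card σ : ℕ) : K) ≠ 0 :=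
    Nat.cast_ne_zero.mpr (Nat.add_pos_right _ Fintype.card_pos).ne'
  rw [sum_pderiv_X_mul]
  constructor
  · rintro rfl
    exact (scaleCoeffs_inv_scaleCoeffs hw p).symm
  · rintro rfl
    exact scaleCoeffs_scaleCoeffs_inv hw g

end Field

lemma eq_C_of_forall_pderiv_eq_zero [CommRing R] [IsDomain R] [CharZero R]
    {q : MvPolynomial σ R} (h : ∀ i, pderiv i q = 0) : q = C (coeff 0 q) := by
  classical
  ext d
  rw [coeff_C]
  split_ifs with hd
  · rw [hd]
  obtain ⟨i, hi⟩ : ∃ i, d i ≠ 0 := by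
    by_contra! h0
    exact hd (Finsupp.ext h0).symm
  have hle : Finsupp.single i 1 ≤ d := Finsupp.single_le_iff.mpr (Nat.one_le_iff_ne_zero.mpr hi)
  have hcoeff := coeff_pderiv (i := i) q (d - Finsupp.single i 1)
  rw [h i, coeff_zero, tsub_add_cancel_of_le hle] at hcoeff
  exact (mul_eq_zero.mp hcoeff.symm).resolve_right (Nat.cast_add_one_ne_zero _)

open Finset in
lemma card_setOf_degree_le [Fintype σ] (m : ℕ) :
    Nat.card {d : σ →₀ ℕ | d.degree ≤ m} = (m + Fintype.card σ).choose (Fintype.card σ) := by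
  classical
  have hset : {d : σ →₀ ℕ | d.degree ≤ m} =
      ((range (m + 1)).biUnion fun n => (univ : Finset σ).finsuppAntidiag n :
        Set (σ →₀ ℕ)) := by
    ext d
    simp [Finsupp.degree_eq_sum]
  have hdisj : (range (m + 1) : Set ℕ).PairwiseDisjoint
      fun n => (univ : Finset σ).finsuppAntidiag n := fun a _ b _ hab =>
    disjoint_left.mpr fun d ha hb =>
      hab ((mem_finsuppAntidiag.mp ha).1.symm.trans (mem_finsuppAntidiag.mp hb).1)
  rw [hset, Nat.card_coe_set_eq, Set.ncard_coe_finset, card_biUnion hdisj]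
  simp [card_finsuppAntidiag_nat_eq_multichoose, Nat.sum_range_multichoose]

lemma finrank_restrictTotalDegree [Fintype σ] [CommRing R] [Nontrivial R] (m : ℕ) :
    Module.finrank R (restrictTotalDegree σ R m) =
      (m + Fintype.card σ).choose (Fintype.card σ) := by
  rw [restrictTotalDegree, Module.finrank_eq_nat_card_basis (basisRestrictSupport R _)]
  exact card_setOf_degree_le m

end MvPolynomial

lemma mem_polyLE3 {m : ℤ} {p : P3} : p ∈ polyLE3 m ↔ ∀ d ∈ p.support, (d.degree : ℤ) ≤ m := by
  unfold polyLE3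
  split_ifs with hm
  · rw [restrictTotalDegree, mem_restrictSupport_iff]
    refine forall₂_congr fun d _ => ?_
    change d.degree ≤ m.toNat ↔ _
    omega
  · rw [Submodule.mem_bot, ← support_eq_empty, Finset.eq_empty_iff_forall_notMem]
    refine forall_congr' fun d => ⟨fun h hd => absurd hd h, fun h hd => ?_⟩
    have := h hd
    omega

lemma polyLE3_natCast (k : ℕ) : polyLE3 k = restrictTotalDegree (Fin 3) ℝ k := by
  simp [polyLE3]

instance (k : ℕ) : Module.Finite ℝ (polyLE3 k) := by
  rw [polyLE3_natCast]
  infer_instance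

lemma finrank_polyLE3 (k : ℕ) : Module.finrank ℝ (polyLE3 k) = (k + 3).choose 3 := by
  rw [polyLE3_natCast, finrank_restrictTotalDegree, Fintype.card_fin]

lemma one_mem_polyLE3 (k : ℕ) : (1 : P3) ∈ polyLE3 k := by
  rw [mem_polyLE3]
  intro d hd
  rw [support_one, Finset.mem_singleton] at hd
  rw [hd, map_zero]
  positivity

lemma pderiv_mem_polyLE3 {m : ℤ} {q : P3} (i : Fin 3) (hq : q ∈ polyLE3 m) :
    pderiv i q ∈ polyLE3 (m - 1) := by
  rw [mem_polyLE3] at hq ⊢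
  intro d hd
  rw [mem_support_iff, coeff_pderiv] at hd
  have := hq _ (mem_support_iff.mpr (left_ne_zero_of_mul hd))
  rw [map_add, Finsupp.degree_single] at this
  omega

lemma scaleCoeffs_mem_polyLE3 {m : ℤ} {p : P3} (w : (Fin 3 →₀ ℕ) → ℝ) (hp : p ∈ polyLE3 m) :
    scaleCoeffs w p ∈ polyLE3 m := by
  rw [mem_polyLE3] at hp ⊢
  exact fun d hd => hp d (support_scaleCoeffs_subset w p hd)

/-- The triple `(L⁻¹ ∂ᵢ q)ᵢ`, where `L P = ∑ⱼ ∂ⱼ (xⱼ P)`. -/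
def tripleOfPotential : P3 →ₗ[ℝ] (Fin 3 → P3) :=
  LinearMap.pi fun i =>
    scaleCoeffs (fun d => ((d.degree + Fintype.card (Fin 3) : ℕ) : ℝ))⁻¹ ∘ₗ
      (pderiv i).toLinearMap

lemma rowDiv_eq_pderiv_iff {P : Fin 3 → P3} {q : P3} :
    (∀ i, rowDiv P i = pderiv i q) ↔ P = tripleOfPotential q := by
  rw [funext_iff]
  exact forall_congr' fun i => sum_pderiv_X_mul_eq_iff

lemma tripleOfPotential_eq_zero_iff {q : P3} :
    tripleOfPotential q = 0 ↔ ∀ i, pderiv i q = 0 := by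
  rw [eq_comm, ← rowDiv_eq_pderiv_iff]
  simp [rowDiv, eq_comm]

lemma range_tripleOfPotential (k : ℕ) :
    LinearMap.range (tripleOfPotential ∘ₗ (polyLE3 k).subtype) = gradDivTriples k := by
  ext P
  constructor
  · rintro ⟨⟨q, hq⟩, rfl⟩
    exact ⟨fun i => scaleCoeffs_mem_polyLE3 _ (pderiv_mem_polyLE3 i hq), q, hq,
      rowDiv_eq_pderiv_iff.mpr rfl⟩
  · rintro ⟨-, q, hq, hP⟩
    exact ⟨⟨q, hq⟩, (rowDiv_eq_pderiv_iff.mp hP).symm⟩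

lemma ker_tripleOfPotential (k : ℕ) :
    LinearMap.ker (tripleOfPotential ∘ₗ (polyLE3 k).subtype) =
      Submodule.span ℝ {⟨1, one_mem_polyLE3 k⟩} := by
  ext ⟨q, hq⟩
  simp only [LinearMap.mem_ker, LinearMap.comp_apply, Submodule.subtype_apply,
    tripleOfPotential_eq_zero_iff, Submodule.mem_span_singleton, Subtype.ext_iff,
    Submodule.coe_smul, smul_eq_C_mul, mul_one]
  constructor
  · exact fun h => ⟨coeff 0 q, (eq_C_of_forall_pderiv_eq_zero h).symm⟩
  · rintro ⟨c, rfl⟩ i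
    exact pderiv_C

lemma finrank_ker_tripleOfPotential (k : ℕ) :
    Module.finrank ℝ (LinearMap.ker (tripleOfPotential ∘ₗ (polyLE3 k).subtype)) = 1 := by
  rw [ker_tripleOfPotential]
  exact finrank_span_singleton (Subtype.coe_ne_coe.mp one_ne_zero)

lemma Nat.cast_add_three_choose_three (k : ℕ) :
    (((k + 3).choose 3 : ℕ) : ℚ) = (k + 1) * (k + 2) * (k + 3) / 6 := by
  rw [← Nat.choose_symm_add, Nat.cast_add_choose]
  push_cast [Nat.factorial_succ]
  field_simp
  ring

/-- The dimension of the space of triples `(P₁,P₂,P₃) ∈ 𝒫_{k-1}³` whose row-wise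
divergence is a gradient of an element of `𝒫_k` is `(k³ + 6k² + 11k)/6 = dim 𝒫_k - 1`. -/
theorem dim_gradDivTriples (k : ℕ) :
    (Module.finrank ℝ (gradDivTriples k) : ℚ) =
      ((k : ℚ) ^ 3 + 6 * (k : ℚ) ^ 2 + 11 * (k : ℚ)) / 6 ∧
    ((k : ℚ) ^ 3 + 6 * (k : ℚ) ^ 2 + 11 * (k : ℚ)) / 6 =
      (Module.finrank ℝ (polyLE3 (k : ℤ)) : ℚ) - 1 := by
  have hrank := LinearMap.finrank_range_add_finrank_ker
    (tripleOfPotential ∘ₗ (polyLE3 (k : ℤ)).subtype)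
  rw [range_tripleOfPotential, finrank_ker_tripleOfPotential, finrank_polyLE3] at hrank
  have hcast :
      (Module.finrank ℝ (gradDivTriples k) : ℚ) + 1 = (k + 1) * (k + 2) * (k + 3) / 6 := by
    rw [← Nat.cast_add_three_choose_three, ← hrank]
    norm_cast
  rw [finrank_polyLE3, Nat.cast_add_three_choose_three]
  constructor <;> linarith
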